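/- In the category of sets, a morphism f : X → Y has all fibers of cardinality less than κ (where κ is a regular uncountable cardinal, or any infinite regular cardinal) if and only if f is relatively κ-compact, i.e., for every κ-compact set Z and map g : Z → Y, the pullback Z ×_Y X is κ-compact. -/

import Mathlib

open CategoryTheory CategoryTheory.Limits

universe w v u

/-- A category `J` is `κ`-filtered if every diagram in `J` indexed by a category
with fewer than `κ` morphisms admits a cocone. -/
def IsCardFiltered (κ : Cardinal.{w}) (J : Type w) [SmallCategory J] : Prop :=
  ∀ (K : Type w) [SmallCategory K], Cardinal.mk (Σ a b : K, a ⟶ b) < κ →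
    ∀ F : K ⥤ J, Nonempty (Cocone F)

/-- An object `X` is `κ`-compact if `Hom(X, −)` preserves `κ`-filtered colimits. -/
def IsKappaCompact (κ : Cardinal.{w}) {E : Type u} [Category.{v} E] (X : E) : Prop :=
  ∀ (J : Type w) [SmallCategory J], IsCardFiltered κ J →
    ∀ (F : J ⥤ E) (c : Cocone F), Nonempty (IsColimit c) →
      Nonempty (IsColimit ((coyoneda.obj (Opposite.op X)).mapCocone c))

/-- A morphism `f : X ⟶ Y` is relatively `κ`-compact if its pullback along any map
from a `κ`-compact object is `κ`-compact. -/
def RelKappaCompact (κ : Cardinal.{w}) {E : Type u} [Category.{v} E] {X Y : E}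
    (f : X ⟶ Y) : Prop :=
  ∀ (Z : E) (g : Z ⟶ Y), IsKappaCompact.{w} κ Z →
    ∀ (P : E) (fst : P ⟶ X) (snd : P ⟶ Z), IsPullback fst snd f g →
      IsKappaCompact.{w} κ P

/-! The `κ`-compact objects of `Type u` are exactly the types of cardinality `< κ`: once
`IsKappaCompact` is recognised as Mathlib's `IsCardinalPresentable`, this is
`Types.isCardinalPresentable_iff`. The pullback of `f` along `g : Z → Y` is
`Σ z, f⁻¹(g z)`, of cardinality `< κ` by regularity when `Z` and the fibers are;
conversely each fiber is the pullback of `f` along a point. -/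

open Cardinal

section

variable (κ : Cardinal.{w}) [Fact κ.IsRegular]

theorem isCardFiltered_iff_isCardinalFiltered (J : Type w) [SmallCategory J] :
    IsCardFiltered κ J ↔ IsCardinalFiltered J κ := by
  have hArrow (K : Type w) [SmallCategory K] :
      HasCardinalLT (Arrow K) κ ↔ #(Σ a b : K, a ⟶ b) < κ := by
    rw [hasCardinalLT_iff_of_equiv (Arrow.equivSigma K), hasCardinalLT_iff_cardinal_mk_lt]
  exact ⟨fun h ↦ ⟨fun F hK ↦ h _ ((hArrow _).1 hK) F⟩,
    fun h K _ hK F ↦ h.nonempty_cocone F ((hArrow K).2 hK)⟩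

theorem isKappaCompact_iff_isCardinalPresentable {E : Type u} [Category.{v} E] (X : E) :
    IsKappaCompact κ X ↔ IsCardinalPresentable X κ := by
  simp only [IsKappaCompact, isCardFiltered_iff_isCardinalFiltered]
  exact ⟨fun h ↦ ⟨fun J _ _ ↦ ⟨fun {F} ↦ ⟨fun hc ↦ h J inferInstance F _ ⟨hc⟩⟩⟩⟩,
    fun h J _ _ F c ⟨hc⟩ ↦
      have := preservesColimitsOfShape_of_isCardinalPresentable X κ J
      ⟨isColimitOfPreserves _ hc⟩⟩

end

namespace CategoryTheory.Limits.Types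

theorem isKappaCompact_iff (κ : Cardinal.{u}) [Fact κ.IsRegular] (X : Type u) :
    IsKappaCompact κ X ↔ #X < κ := by
  rw [isKappaCompact_iff_isCardinalPresentable, CategoryTheory.Types.isCardinalPresentable_iff,
    hasCardinalLT_iff_cardinal_mk_lt]

def pullbackObjEquivSigma {X Y Z : Type u} (f : X ⟶ Y) (g : Z ⟶ Y) :
    PullbackObj f g ≃ Σ z : Z, {x : X // f x = g z} where
  toFun p := ⟨p.1.2, p.1.1, p.2⟩
  invFun s := ⟨(s.2.1, s.1), s.2.2⟩

theorem relKappaCompact_iff (κ : Cardinal.{u}) [Fact κ.IsRegular] {X Y : Type u} (f : X ⟶ Y) :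
    RelKappaCompact κ f ↔ ∀ (Z : Type u) (g : Z ⟶ Y), #Z < κ → #(PullbackObj f g) < κ := by
  refine ⟨fun h Z g hZ ↦ ?_, fun h Z g hZ P fst snd hP ↦ ?_⟩
  · have hpb := IsPullback.of_isLimit (pullbackLimitCone f g).isLimit
    exact (isKappaCompact_iff κ _).1 (h Z g ((isKappaCompact_iff κ Z).2 hZ) _ _ _ hpb)
  · rw [isKappaCompact_iff] at hZ ⊢
    exact (mk_congr (PullbackCone.IsLimit.equivPullbackObj hP.isLimit)).trans_lt (h Z g hZ)

end CategoryTheory.Limits.Types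

/-- In `Set`, a map has all fibers of cardinality `< κ` (κ an infinite regular cardinal)
iff it is relatively `κ`-compact. -/
theorem fibers_small_iff_relatively_kappaCompact
    (κ : Cardinal.{u}) (hκ : κ.IsRegular) {X Y : Type u} (f : X ⟶ Y) :
    (∀ y : Y, Cardinal.mk {x : X // f x = y} < κ) ↔ RelKappaCompact.{u} κ f := by
  have : Fact κ.IsRegular := ⟨hκ⟩
  rw [Types.relKappaCompact_iff]
  refine ⟨fun hfib Z g hZ ↦ ?_, fun h y ↦ ?_⟩
  · rw [mk_congr (Types.pullbackObjEquivSigma f g), mk_sigma]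
    exact sum_lt_of_isRegular hκ hZ fun z ↦ hfib (g z)
  · have hpt : #PUnit.{u + 1} < κ := mk_punit ▸ one_lt_aleph0.trans_le hκ.aleph0_le
    have hpullback := h PUnit (↾fun _ ↦ y) hpt
    rwa [mk_congr ((Types.pullbackObjEquivSigma f _).trans (Equiv.uniqueSigma _))] at hpullback
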